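/- Let c : ℤ → ℂ be a complex sequence and θ₀ ∈ [0, π/2). Assume (4): for every n ≥ 1, both c_n + c_{-n} and c_n − c_{-n} lie in the sector K(θ₀). Assume condition (2*): there exist a natural number N₀ and a constant M > 0 such that for every m ≥ 1, ∑_{n=m}^{2m} |c_n − c_{n+1}| ≤ M · max_{m ≤ n < m+N₀} |c_n|. Then the following are equivalent: (a) the symmetric partial sums S_n(f,x) = ∑_{k=−n}^{n} c_k e^{ikx} converge uniformly on ℝ to a continuous 2π-periodic function f; (b) lim_{n→∞} n·c_n = 0 and ∑_{n=1}^{∞} |c_n + c_{−n}| < ∞. -/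

import Mathlib

open Filter Finset

namespace Thm1



lemma sector {θ₀ : ℝ} (h0 : 0 ≤ θ₀) (h1 : θ₀ < Real.pi/2) {z : ℂ} (hz : |z.arg| ≤ θ₀) :
    Real.cos θ₀ * ‖z‖ ≤ z.re := by
  rcases eq_or_ne z 0 with rfl | hz0
  · simp
  · have harg : Real.cos θ₀ ≤ Real.cos z.arg := by
      rw [← Real.cos_abs z.arg]
      exact Real.cos_le_cos_of_nonneg_of_le_pi (abs_nonneg _)
        (by linarith [Real.pi_pos]) hz
    have hca := Complex.cos_arg hz0
    have habs : (0:ℝ) < ‖z‖ := norm_pos_iff.mpr hz0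
    have : Real.cos z.arg * ‖z‖ = z.re := by
      rw [hca]; field_simp
    nlinarith
lemma cos_theta_pos {θ₀ : ℝ} (h0 : 0 ≤ θ₀) (h1 : θ₀ < Real.pi/2) : 0 < Real.cos θ₀ :=
  Real.cos_pos_of_mem_Ioo ⟨by linarith [Real.pi_pos], h1⟩

/-- symmetric sum decomposition -/
lemma sum_Icc_symm (g : ℤ → ℂ) (n : ℕ) :
    ∑ k ∈ Finset.Icc (-(n:ℤ)) (n:ℤ), g k
      = g 0 + ∑ k ∈ Finset.Icc 1 n, (g (k:ℤ) + g (-(k:ℤ))) := by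
  induction n with
  | zero => simp
  | succ n ih =>
    have h1 : Finset.Icc (-(n+1:ℕ):ℤ) ((n+1:ℕ):ℤ)
        = insert (-(n+1:ℕ):ℤ) (insert ((n+1:ℕ):ℤ) (Finset.Icc (-(n:ℕ):ℤ) (n:ℤ))) := by
      ext k; simp [Finset.mem_Icc, Finset.mem_insert]; omega
    have h2 : Finset.Icc 1 (n+1) = insert (n+1) (Finset.Icc 1 n) := by
      ext k; simp [Finset.mem_Icc, Finset.mem_insert]; omega
    have hni : ((n+1:ℕ):ℤ) ∉ Finset.Icc (-(n:ℕ):ℤ) (n:ℤ) := by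
      simp only [Finset.mem_Icc]
      push_cast
      omega
    have hni2 : (-(n+1:ℕ):ℤ) ∉ insert ((n+1:ℕ):ℤ) (Finset.Icc (-(n:ℕ):ℤ) (n:ℤ)) := by
      simp [Finset.mem_Icc, Finset.mem_insert]
      omega
    have hni3 : (n+1) ∉ Finset.Icc 1 n := by simp
    rw [h1, Finset.sum_insert hni2, Finset.sum_insert hni, ih, h2, Finset.sum_insert hni3]
    push_cast
    ring

/-- pair identity: c k e^{ikx} + c(-k) e^{-ikx} = a_k cos kx + b_k * i sin kx -/
lemma pair_eq (c : ℤ → ℂ) (k : ℕ) (x : ℝ) :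
    c (k:ℤ) * Complex.exp (((k:ℤ):ℂ) * (x:ℂ) * Complex.I)
      + c (-(k:ℤ)) * Complex.exp (((-(k:ℤ)):ℂ) * (x:ℂ) * Complex.I)
    = (c (k:ℤ) + c (-(k:ℤ))) * (Real.cos (k*x) : ℂ)
      + (c (k:ℤ) - c (-(k:ℤ))) * ((Real.sin (k*x) : ℂ) * Complex.I) := by
  have h1 : Complex.exp (((k:ℤ):ℂ) * (x:ℂ) * Complex.I)
      = (Real.cos (k*x) : ℂ) + (Real.sin (k*x) : ℂ) * Complex.I := by
    rw [show ((k:ℤ):ℂ) * (x:ℂ) * Complex.I = ((k*x : ℝ):ℂ) * Complex.I by push_cast; ring,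
      Complex.exp_mul_I, Complex.ofReal_cos, Complex.ofReal_sin]
  have h2 : Complex.exp (((-(k:ℤ)):ℂ) * (x:ℂ) * Complex.I)
      = (Real.cos (k*x) : ℂ) - (Real.sin (k*x) : ℂ) * Complex.I := by
    rw [show ((-(k:ℤ)):ℂ) * (x:ℂ) * Complex.I = ((-(k*x) : ℝ):ℂ) * Complex.I by push_cast; ring,
      Complex.exp_mul_I, Complex.ofReal_cos, Complex.ofReal_sin]
    rw [Complex.ofReal_neg, Complex.cos_neg, Complex.sin_neg]; ring
  rw [h1, h2]; ring



/-- telescoping: c u = c v + ∑_{j∈Ico u v} (c j - c (j+1)) for u ≤ v -/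
lemma telescope (c : ℤ → ℂ) {u v : ℕ} (h : u ≤ v) :
    c (u:ℤ) = c (v:ℤ) + ∑ j ∈ Finset.Ico u v, (c (j:ℤ) - c ((j:ℤ)+1)) := by
  induction v, h using Nat.le_induction with
  | base => simp
  | succ v hv ih =>
    rw [Finset.sum_Ico_succ_top hv, ih]
    push_cast
    ring

lemma abs_exp_sub_one (y : ℝ) :
    ‖Complex.exp ((y:ℂ) * Complex.I) - 1‖ = 2 * |Real.sin (y/2)| := by
  have hre : (Complex.exp ((y:ℂ) * Complex.I) - 1).re = Real.cos y - 1 := by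
    simp [Complex.exp_ofReal_mul_I_re]
  have him : (Complex.exp ((y:ℂ) * Complex.I) - 1).im = Real.sin y := by
    simp [Complex.exp_ofReal_mul_I_im]
  have hsq : (‖Complex.exp ((y:ℂ) * Complex.I) - 1‖)^2
      = (2 * |Real.sin (y/2)|)^2 := by
    rw [Complex.sq_norm, Complex.normSq_apply, hre, him]
    have h1 : Real.sin (y/2)^2 = (1 - Real.cos y)/2 := by
      have hc := Real.cos_sq (y/2)
      rw [show 2*(y/2) = y by ring] at hc
      have hs := Real.sin_sq_add_cos_sq (y/2)
      linarith
    have h2 : |Real.sin (y/2)|^2 = Real.sin (y/2)^2 := sq_abs _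
    have h3 : Real.sin y ^2 + Real.cos y ^2 = 1 := Real.sin_sq_add_cos_sq y
    nlinarith
  have h1 : (0:ℝ) ≤ ‖Complex.exp ((y:ℂ) * Complex.I) - 1‖ := norm_nonneg _
  have h2 : (0:ℝ) ≤ 2 * |Real.sin (y/2)| := by positivity
  calc ‖Complex.exp ((y:ℂ) * Complex.I) - 1‖
      = Real.sqrt ((‖Complex.exp ((y:ℂ) * Complex.I) - 1‖)^2) :=
        (Real.sqrt_sq h1).symm
    _ = Real.sqrt ((2 * |Real.sin (y/2)|)^2) := by rw [hsq]
    _ = 2 * |Real.sin (y/2)| := Real.sqrt_sq h2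

/-- geometric identity -/
lemma geom_identity (y : ℝ) (u v : ℕ) (huv : u ≤ v) :
    (Complex.exp ((y:ℂ) * Complex.I) - 1) *
      ∑ k ∈ Finset.Icc u v, Complex.exp ((k:ℂ) * (y:ℂ) * Complex.I)
    = Complex.exp (((v:ℂ)+1) * (y:ℂ) * Complex.I) - Complex.exp ((u:ℂ) * (y:ℂ) * Complex.I) := by
  induction v, huv using Nat.le_induction with
  | base =>
    rw [Finset.Icc_self, Finset.sum_singleton]
    rw [show ((u:ℂ)+1) * (y:ℂ) * Complex.I = (y:ℂ)*Complex.I + (u:ℂ)*(y:ℂ)*Complex.I by ring,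
      Complex.exp_add]
    ring
  | succ v hv ih =>
    rw [Finset.sum_Icc_succ_top (by omega : u ≤ v+1), mul_add, ih]
    push_cast
    rw [show ((v:ℂ)+1+1) * (y:ℂ) * Complex.I = (y:ℂ)*Complex.I + ((v:ℂ)+1)*(y:ℂ)*Complex.I by ring,
      Complex.exp_add]
    ring

/-- Dirichlet-type kernel bound -/
lemma dirichlet_bound {y : ℝ} (hy : Real.sin (y/2) ≠ 0) (u v : ℕ) :
    |∑ k ∈ Finset.Icc u v, Real.sin (k * y)| ≤ 1 / |Real.sin (y/2)| := by
  have hspos : 0 < |Real.sin (y/2)| := abs_pos.mpr hy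
  rcases le_or_gt u v with huv | huv
  · have him : ∑ k ∈ Finset.Icc u v, Real.sin (k * y)
        = (∑ k ∈ Finset.Icc u v, Complex.exp ((k:ℂ) * (y:ℂ) * Complex.I)).im := by
      rw [Complex.im_sum]
      apply Finset.sum_congr rfl
      intro k _
      rw [show ((k:ℂ) * (y:ℂ) * Complex.I) = (((k:ℝ)*y : ℝ):ℂ) * Complex.I by push_cast; ring]
      rw [Complex.exp_ofReal_mul_I_im]
    have hz1 : Complex.exp ((y:ℂ) * Complex.I) - 1 ≠ 0 := by
      intro h
      have : ‖Complex.exp ((y:ℂ) * Complex.I) - 1‖ = 0 := by rw [h]; simp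
      rw [abs_exp_sub_one] at this
      have := hspos
      linarith
    have hgeom := geom_identity y u v huv
    have habs : ‖∑ k ∈ Finset.Icc u v, Complex.exp ((k:ℂ) * (y:ℂ) * Complex.I)‖
        ≤ 2 / (2 * |Real.sin (y/2)|) := by
      have h2 : ‖Complex.exp ((y:ℂ) * Complex.I) - 1‖ *
          ‖∑ k ∈ Finset.Icc u v, Complex.exp ((k:ℂ) * (y:ℂ) * Complex.I)‖
          ≤ 2 := by
        rw [← norm_mul, hgeom]
        calc ‖_‖ ≤ ‖Complex.exp (((v:ℂ)+1) * (y:ℂ) * Complex.I)‖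
              + ‖Complex.exp ((u:ℂ) * (y:ℂ) * Complex.I)‖ := by
              exact norm_sub_le _ _
          _ ≤ 2 := by
              rw [show (((v:ℂ)+1) * (y:ℂ) * Complex.I) = ((((v:ℝ)+1)*y : ℝ):ℂ) * Complex.I by push_cast; ring,
                show ((u:ℂ) * (y:ℂ) * Complex.I) = (((u:ℝ)*y : ℝ):ℂ) * Complex.I by push_cast; ring,
                Complex.norm_exp_ofReal_mul_I, Complex.norm_exp_ofReal_mul_I]
              norm_num
      rw [abs_exp_sub_one] at h2
      rw [le_div_iff₀ (by positivity)]
      linarith [h2]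
    rw [him]
    calc |(∑ k ∈ Finset.Icc u v, Complex.exp ((k:ℂ) * (y:ℂ) * Complex.I)).im|
        ≤ ‖∑ k ∈ Finset.Icc u v, Complex.exp ((k:ℂ) * (y:ℂ) * Complex.I)‖ :=
          Complex.abs_im_le_norm _
      _ ≤ 2 / (2 * |Real.sin (y/2)|) := habs
      _ = 1 / |Real.sin (y/2)| := by field_simp
  · rw [Finset.Icc_eq_empty (by omega)]
    simp


/-- Abel summation identity -/
lemma abel_identity (c : ℤ → ℂ) (y : ℝ) (u n : ℕ) :
    ∑ k ∈ Finset.Icc u n, c (k:ℤ) * (Real.sin (k*y) : ℂ)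
    = c ((n:ℤ)+1) * (∑ k ∈ Finset.Icc u n, Real.sin (k*y) : ℝ)
      + ∑ j ∈ Finset.Icc u n, (c (j:ℤ) - c ((j:ℤ)+1))
          * (∑ k ∈ Finset.Icc u j, Real.sin (k*y) : ℝ) := by
  have key : ∀ k ∈ Finset.Icc u n, c (k:ℤ) * (Real.sin (k*y) : ℂ)
      = c ((n:ℤ)+1) * (Real.sin (k*y) : ℂ)
        + ∑ j ∈ Finset.Icc k n, (c (j:ℤ) - c ((j:ℤ)+1)) * (Real.sin (k*y) : ℂ) := by
    intro k hk
    rw [Finset.mem_Icc] at hk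
    rcases Nat.eq_or_lt_of_le hk.2 with heq | hlt
    · subst heq
      rw [Finset.Icc_self, Finset.sum_singleton]
      have : ((k:ℤ)+1) = ((k+1:ℕ):ℤ) := by push_cast; ring
      ring
    · rw [← Finset.sum_mul]
      have h2 : c (k:ℤ) = c ((n:ℤ)+1) + ∑ j ∈ Finset.Icc k n, (c (j:ℤ) - c ((j:ℤ)+1)) := by
        have ht2 := telescope c (show k ≤ n+1 by omega)
        have : Finset.Ico k (n+1) = Finset.Icc k n := by
          ext j; simp [Finset.mem_Ico, Finset.mem_Icc]
        rw [this] at ht2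
        push_cast at ht2
        exact ht2
      rw [h2]; ring
  rw [Finset.sum_congr rfl key, Finset.sum_add_distrib, ← Finset.mul_sum]
  congr 1
  · rw [Complex.ofReal_sum]
  · rw [Finset.sum_comm' (t' := Finset.Icc u n) (s' := fun j => Finset.Icc u j)
      (by intro k j; simp only [Finset.mem_Icc]; omega)]
    apply Finset.sum_congr rfl
    intro j _
    rw [← Finset.mul_sum, Complex.ofReal_sum]

/-- GM tail bound -/
lemma gm_tail (c : ℤ → ℂ) (N₀ : ℕ) (M κ : ℝ) (hMpos : 0 < M)
    (hGM : ∀ m W, 1 ≤ m → (∀ k, m ≤ k → k < m + N₀ → ‖c (k:ℤ)‖ ≤ W) →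
      ∑ j ∈ Finset.Icc m (2*m), ‖c (j:ℤ) - c ((j:ℤ)+1)‖ ≤ M * W)
    (m₀ : ℕ) (hm₀ : 1 ≤ m₀)
    (hsmall : ∀ k : ℕ, m₀ ≤ k → (k:ℝ) * ‖c (k:ℤ)‖ ≤ κ) :
    ∀ m n : ℕ, m₀ ≤ m →
      ∑ j ∈ Finset.Icc m n, ‖c (j:ℤ) - c ((j:ℤ)+1)‖ ≤ 2*M*κ/m := by
  have hκ : 0 ≤ κ := le_trans (by positivity) (hsmall m₀ le_rfl)
  have hwin : ∀ m : ℕ, m₀ ≤ m → ∀ k, m ≤ k → k < m + N₀ → ‖c (k:ℤ)‖ ≤ κ/m := by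
    intro m hm k hk _
    have hmpos : (0:ℝ) < m := by exact_mod_cast lt_of_lt_of_le hm₀ hm
    have hkpos : (0:ℝ) < k := lt_of_lt_of_le hmpos (by exact_mod_cast hk)
    have := hsmall k (le_trans hm hk)
    rw [le_div_iff₀ hmpos]
    calc ‖c (k:ℤ)‖ * m ≤ ‖c (k:ℤ)‖ * k := by
          apply mul_le_mul_of_nonneg_left _ (norm_nonneg _)
          exact_mod_cast hk
      _ ≤ κ := by linarith [this]
  -- strong induction on d where n ≤ m + d
  suffices h : ∀ d m n : ℕ, m₀ ≤ m → n ≤ m + d →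
      ∑ j ∈ Finset.Icc m n, ‖c (j:ℤ) - c ((j:ℤ)+1)‖ ≤ 2*M*κ/m by
    intro m n hm
    exact h n m n hm (by omega)
  intro d
  induction d using Nat.strong_induction_on with
  | _ d ih =>
    intro m n hm hn
    have hm1 : 1 ≤ m := le_trans hm₀ hm
    have hmpos : (0:ℝ) < m := by exact_mod_cast hm1
    have hblock : ∑ j ∈ Finset.Icc m (2*m), ‖c (j:ℤ) - c ((j:ℤ)+1)‖ ≤ M * (κ/m) :=
      hGM m (κ/m) hm1 (hwin m hm)
    rcases le_or_gt n (2*m) with hle | hgt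
    · calc ∑ j ∈ Finset.Icc m n, ‖c (j:ℤ) - c ((j:ℤ)+1)‖
          ≤ ∑ j ∈ Finset.Icc m (2*m), ‖c (j:ℤ) - c ((j:ℤ)+1)‖ := by
            apply Finset.sum_le_sum_of_subset_of_nonneg
            · apply Finset.Icc_subset_Icc_right hle
            · intro _ _ _; exact norm_nonneg _
        _ ≤ M * (κ/m) := hblock
        _ ≤ 2*M*κ/m := by
            have he : (2*M*κ/m : ℝ) = M*(κ/m) + M*(κ/m) := by field_simp; ring
            have hp : (0:ℝ) ≤ M*(κ/m) := by positivity
            linarith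
    · have hsplit : Finset.Icc m n = Finset.Icc m (2*m) ∪ Finset.Icc (2*m+1) n := by
        ext j; simp only [Finset.mem_Icc, Finset.mem_union]; omega
      have hdisj : Disjoint (Finset.Icc m (2*m)) (Finset.Icc (2*m+1) n) := by
        rw [Finset.disjoint_left]
        intro j hj1 hj2
        simp only [Finset.mem_Icc] at hj1 hj2
        omega
      have hd' : n - (2*m+1) < d := by omega
      have hrec := ih (n - (2*m+1)) hd' (2*m+1) n (by omega) (by omega)
      rw [hsplit, Finset.sum_union hdisj]
      have h2m1 : (0:ℝ) < (2*m+1:ℕ) := by positivity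
      have hbound2 : 2*M*κ/((2*m+1:ℕ):ℝ) ≤ M*κ/m := by
        rw [div_le_div_iff₀ h2m1 hmpos]
        push_cast
        nlinarith
      calc _ ≤ M * (κ/m) + 2*M*κ/((2*m+1:ℕ):ℝ) := add_le_add hblock hrec
        _ ≤ M * (κ/m) + M*κ/m := by linarith
        _ = 2*M*κ/m := by field_simp; ring


section est
variable (c : ℤ → ℂ) (N₀ : ℕ) (M κ : ℝ)

/-- core sine sum estimate for y ∈ (0, π] -/
lemma sine_estimate_core (hMpos : 0 < M) (hκ : 0 < κ)
    (hGM : ∀ m W, 1 ≤ m → (∀ k, m ≤ k → k < m + N₀ → ‖c (k:ℤ)‖ ≤ W) →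
      ∑ j ∈ Finset.Icc m (2*m), ‖c (j:ℤ) - c ((j:ℤ)+1)‖ ≤ M * W)
    (m₀ : ℕ) (hm₀ : 1 ≤ m₀)
    (hsmall : ∀ k : ℕ, m₀ ≤ k → (k:ℝ) * ‖c (k:ℤ)‖ ≤ κ)
    {y : ℝ} (hy : 0 < y) (hy2 : y ≤ Real.pi) (m n : ℕ) (hm : m₀ ≤ m) :
    ‖∑ k ∈ Finset.Icc m n, c (k:ℤ) * (Real.sin (k*y) : ℂ)‖
      ≤ (1 + Real.pi + (1+2*M)*Real.pi) * κ := by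
  have hπ := Real.pi_pos
  have hsinpos : 0 < Real.sin (y/2) :=
    Real.sin_pos_of_pos_of_lt_pi (by linarith) (by linarith)
  have hjordan : y / Real.pi ≤ Real.sin (y/2) := by
    have := Real.mul_le_sin (x := y/2) (by linarith) (by linarith)
    calc y / Real.pi = 2 / Real.pi * (y/2) := by field_simp
      _ ≤ Real.sin (y/2) := this
  have hinv : 1 / |Real.sin (y/2)| ≤ Real.pi / y := by
    rw [abs_of_pos hsinpos, div_le_div_iff₀ hsinpos hy]
    rw [div_le_iff₀ hπ] at hjordan
    nlinarith
  set K : ℕ := max m (⌈1/y⌉₊) with hK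
  have hKm : m ≤ K := le_max_left _ _
  have hK1 : 1 ≤ K := le_trans (le_trans hm₀ hm) hKm
  have hKy : 1 ≤ (K:ℝ) * y := by
    have h1 : (1:ℝ)/y ≤ (⌈1/y⌉₊ : ℝ) := Nat.le_ceil _
    have h2 : ((⌈1/y⌉₊:ℕ):ℝ) ≤ (K:ℝ) := by exact_mod_cast le_max_right m _
    rw [show (1:ℝ) = (1/y) * y by field_simp]
    apply mul_le_mul_of_nonneg_right (le_trans h1 h2) hy.le
  -- split the sum
  have hsplit : Finset.Icc m n
      = (Finset.Icc m n).filter (· < K) ∪ (Finset.Icc m n).filter (K ≤ ·) := by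
    ext j
    simp only [Finset.mem_union, Finset.mem_filter, Finset.mem_Icc]
    omega
  have hdisj : Disjoint ((Finset.Icc m n).filter (· < K))
      ((Finset.Icc m n).filter (K ≤ ·)) := by
    rw [Finset.disjoint_left]
    intro j hj1 hj2
    simp only [Finset.mem_filter] at hj1 hj2
    omega
  rw [hsplit, Finset.sum_union hdisj]
  have hsmallpart : ‖∑ k ∈ (Finset.Icc m n).filter (· < K),
      c (k:ℤ) * (Real.sin (k*y) : ℂ)‖ ≤ (1 + Real.pi) * κ := by
    calc ‖∑ k ∈ (Finset.Icc m n).filter (· < K), c (k:ℤ) * (Real.sin (k*y) : ℂ)‖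
        ≤ ∑ k ∈ (Finset.Icc m n).filter (· < K),
            ‖c (k:ℤ) * (Real.sin (k*y) : ℂ)‖ := norm_sum_le _ _
      _ ≤ ∑ k ∈ (Finset.Icc m n).filter (· < K), κ * y := by
          apply Finset.sum_le_sum
          intro k hk
          simp only [Finset.mem_filter, Finset.mem_Icc] at hk
          have hkm : m ≤ k := hk.1.1
          have hkpos : (0:ℝ) < k := by
            have : 1 ≤ k := le_trans (le_trans hm₀ hm) hkm
            exact_mod_cast this
          rw [norm_mul, Complex.norm_real, Real.norm_eq_abs]
          calc ‖c (k:ℤ)‖ * |Real.sin (k*y)|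
              ≤ ‖c (k:ℤ)‖ * ((k:ℝ)*y) := by
                apply mul_le_mul_of_nonneg_left _ (norm_nonneg _)
                calc |Real.sin (k*y)| ≤ |(k:ℝ)*y| := Real.abs_sin_le_abs
                  _ = (k:ℝ)*y := abs_of_nonneg (by positivity)
            _ = ((k:ℝ) * ‖c (k:ℤ)‖) * y := by ring
            _ ≤ κ * y := by
                apply mul_le_mul_of_nonneg_right (hsmall k (le_trans hm hkm)) hy.le
      _ = (((Finset.Icc m n).filter (· < K)).card : ℝ) * (κ * y) := by
          rw [Finset.sum_const, nsmul_eq_mul]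
      _ ≤ (1 + Real.pi) * κ := by
          have hcard : ((Finset.Icc m n).filter (· < K)).card ≤ ⌈1/y⌉₊ := by
            calc ((Finset.Icc m n).filter (· < K)).card
                ≤ (Finset.Ico m K).card := by
                  apply Finset.card_le_card
                  intro j hj
                  simp only [Finset.mem_filter, Finset.mem_Icc] at hj
                  simp only [Finset.mem_Ico]
                  omega
              _ = K - m := Nat.card_Ico m K
              _ ≤ ⌈1/y⌉₊ := by omega
          have hceil : (⌈1/y⌉₊ : ℝ) < 1/y + 1 := Nat.ceil_lt_add_one (by positivity)
          have hcard' : (((Finset.Icc m n).filter (· < K)).card : ℝ) ≤ 1/y + 1 := by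
            calc (((Finset.Icc m n).filter (· < K)).card : ℝ) ≤ (⌈1/y⌉₊:ℝ) := by
                  exact_mod_cast hcard
              _ ≤ 1/y + 1 := hceil.le
          calc (((Finset.Icc m n).filter (· < K)).card : ℝ) * (κ * y)
              ≤ (1/y + 1) * (κ * y) := by
                apply mul_le_mul_of_nonneg_right hcard' (by positivity)
            _ = κ * (1 + y) := by field_simp
            _ ≤ κ * (1 + Real.pi) := by nlinarith
            _ = (1 + Real.pi) * κ := by ring
  have habelpart : ‖∑ k ∈ (Finset.Icc m n).filter (K ≤ ·),
      c (k:ℤ) * (Real.sin (k*y) : ℂ)‖ ≤ (1+2*M)*Real.pi * κ := by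
    have hfilter : (Finset.Icc m n).filter (K ≤ ·) = Finset.Icc K n := by
      ext j
      simp only [Finset.mem_filter, Finset.mem_Icc]
      omega
    rw [hfilter]
    rcases lt_or_ge n K with hnK | hnK
    · rw [Finset.Icc_eq_empty (by omega)]
      simp only [Finset.sum_empty, norm_zero]
      positivity
    · rw [abel_identity]
      have hKpos : (0:ℝ) < K := by exact_mod_cast hK1
      have htail := gm_tail c N₀ M κ hMpos hGM m₀ hm₀ hsmall K n (le_trans hm hKm)
      have hcn1 : ‖c ((n:ℤ)+1)‖ ≤ κ / K := by
        have h1 := hsmall (n+1) (by omega)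
        have h2 : (K:ℝ) ≤ ((n+1:ℕ):ℝ) := by exact_mod_cast Nat.le_succ_of_le hnK
        have h3 : (0:ℝ) < ((n+1:ℕ):ℝ) := by positivity
        rw [le_div_iff₀ hKpos]
        have : ‖c ((n:ℤ)+1)‖ * K ≤ ‖c ((n:ℤ)+1)‖ * ((n+1:ℕ):ℝ) := by
          apply mul_le_mul_of_nonneg_left h2 (norm_nonneg _)
        calc ‖c ((n:ℤ)+1)‖ * K ≤ ((n+1:ℕ):ℝ) * ‖c ((n+1:ℕ):ℤ)‖ := by
              push_cast at this ⊢
              linarith [this]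
          _ ≤ κ := h1
      have hD : ∀ j : ℕ, |∑ k ∈ Finset.Icc K j, Real.sin (k * y)| ≤ Real.pi / y :=
        fun j => le_trans (dirichlet_bound (ne_of_gt hsinpos) K j) hinv
      calc ‖c ((n:ℤ)+1) * (∑ k ∈ Finset.Icc K n, Real.sin (k*y) : ℝ)
            + ∑ j ∈ Finset.Icc K n, (c (j:ℤ) - c ((j:ℤ)+1))
                * (∑ k ∈ Finset.Icc K j, Real.sin (k*y) : ℝ)‖
          ≤ ‖c ((n:ℤ)+1)‖ * |∑ k ∈ Finset.Icc K n, Real.sin (k*y)|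
            + ∑ j ∈ Finset.Icc K n, ‖c (j:ℤ) - c ((j:ℤ)+1)‖
                * |∑ k ∈ Finset.Icc K j, Real.sin (k*y)| := by
            calc ‖_‖ ≤ ‖c ((n:ℤ)+1) * (∑ k ∈ Finset.Icc K n, Real.sin (k*y) : ℝ)‖
                  + ‖∑ j ∈ Finset.Icc K n, (c (j:ℤ) - c ((j:ℤ)+1))
                      * (∑ k ∈ Finset.Icc K j, Real.sin (k*y) : ℝ)‖ := norm_add_le _ _
              _ ≤ _ := by
                  apply add_le_add
                  · rw [norm_mul, Complex.norm_real, Real.norm_eq_abs]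
                  · calc ‖∑ j ∈ Finset.Icc K n, (c (j:ℤ) - c ((j:ℤ)+1))
                          * (∑ k ∈ Finset.Icc K j, Real.sin (k*y) : ℝ)‖
                        ≤ ∑ j ∈ Finset.Icc K n, ‖(c (j:ℤ) - c ((j:ℤ)+1))
                          * (∑ k ∈ Finset.Icc K j, Real.sin (k*y) : ℝ)‖ := norm_sum_le _ _
                      _ = ∑ j ∈ Finset.Icc K n, ‖c (j:ℤ) - c ((j:ℤ)+1)‖
                          * |∑ k ∈ Finset.Icc K j, Real.sin (k*y)| := by
                          apply Finset.sum_congr rfl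
                          intro j _
                          rw [norm_mul, Complex.norm_real, Real.norm_eq_abs]
        _ ≤ (κ/K) * (Real.pi / y) + (2*M*κ/K) * (Real.pi / y) := by
            apply add_le_add
            · apply mul_le_mul hcn1 (hD n) (abs_nonneg _) (by positivity)
            · calc ∑ j ∈ Finset.Icc K n, ‖c (j:ℤ) - c ((j:ℤ)+1)‖
                    * |∑ k ∈ Finset.Icc K j, Real.sin (k*y)|
                  ≤ ∑ j ∈ Finset.Icc K n, ‖c (j:ℤ) - c ((j:ℤ)+1)‖ * (Real.pi / y) := by
                    apply Finset.sum_le_sum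
                    intro j _
                    apply mul_le_mul_of_nonneg_left (hD j) (norm_nonneg _)
                _ = (∑ j ∈ Finset.Icc K n, ‖c (j:ℤ) - c ((j:ℤ)+1)‖) * (Real.pi / y) := by
                    rw [Finset.sum_mul]
                _ ≤ (2*M*κ/K) * (Real.pi / y) := by
                    apply mul_le_mul_of_nonneg_right htail (by positivity)
        _ = (1+2*M) * κ * (Real.pi / ((K:ℝ) * y)) := by field_simp
        _ ≤ (1+2*M)*Real.pi * κ := by
            have h1 : Real.pi / ((K:ℝ)*y) ≤ Real.pi := by
              rw [div_le_iff₀ (by positivity)]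
              nlinarith
            calc (1+2*M) * κ * (Real.pi / ((K:ℝ) * y)) ≤ (1+2*M) * κ * Real.pi := by
                  apply mul_le_mul_of_nonneg_left h1 (by positivity)
              _ = (1+2*M)*Real.pi * κ := by ring
  calc ‖_‖ ≤ _ + _ := norm_add_le _ _
    _ ≤ (1 + Real.pi) * κ + (1+2*M)*Real.pi * κ := add_le_add hsmallpart habelpart
    _ = (1 + Real.pi + (1+2*M)*Real.pi) * κ := by ring

end est
section este
variable (c : ℤ → ℂ) (N₀ : ℕ) (M κ : ℝ)

/-- full sine sum estimate, all real y -/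
lemma sine_estimate (hMpos : 0 < M) (hκ : 0 < κ)
    (hGM : ∀ m W, 1 ≤ m → (∀ k, m ≤ k → k < m + N₀ → ‖c (k:ℤ)‖ ≤ W) →
      ∑ j ∈ Finset.Icc m (2*m), ‖c (j:ℤ) - c ((j:ℤ)+1)‖ ≤ M * W)
    (m₀ : ℕ) (hm₀ : 1 ≤ m₀)
    (hsmall : ∀ k : ℕ, m₀ ≤ k → (k:ℝ) * ‖c (k:ℤ)‖ ≤ κ)
    (m n : ℕ) (hm : m₀ ≤ m) (y : ℝ) :
    ‖∑ k ∈ Finset.Icc m n, c (k:ℤ) * (Real.sin (k*y) : ℂ)‖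
      ≤ (1 + Real.pi + (1+2*M)*Real.pi) * κ := by
  have hπ := Real.pi_pos
  have hCpos : 0 < (1 + Real.pi + (1+2*M)*Real.pi) * κ := by positivity
  set z : ℝ := toIocMod Real.two_pi_pos (-Real.pi) y with hzdef
  have hmem := toIocMod_mem_Ioc Real.two_pi_pos (-Real.pi) y
  have hz1 : -Real.pi < z := hmem.1
  have hz2 : z ≤ Real.pi := by
    have := hmem.2
    linarith [this]
  have hyz : y = z + (toIocDiv Real.two_pi_pos (-Real.pi) y : ℤ) * (2*Real.pi) := by
    have := toIocMod_add_toIocDiv_zsmul Real.two_pi_pos (-Real.pi) y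
    rw [zsmul_eq_mul] at this
    linarith [this]
  set j : ℤ := toIocDiv Real.two_pi_pos (-Real.pi) y with hjdef
  have hsin : ∀ k : ℕ, Real.sin (k*y) = Real.sin (k*z) := by
    intro k
    conv_lhs => rw [hyz]
    rw [show (k:ℝ) * (z + (j:ℝ)*(2*Real.pi)) = k*z + ((k:ℤ)*j : ℤ) * (2*Real.pi) by push_cast; ring]
    exact Real.sin_add_int_mul_two_pi _ _
  simp only [hsin]
  rcases lt_trichotomy z 0 with hneg | hzero | hpos
  · -- use -z
    have h1 : ∀ k : ℕ, Real.sin (k*z) = -Real.sin (k*(-z)) := by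
      intro k
      rw [show (k:ℝ)*(-z) = -((k:ℝ)*z) by ring, Real.sin_neg, neg_neg]
    simp only [h1]
    have h2 : ∑ k ∈ Finset.Icc m n, c (k:ℤ) * ((-Real.sin (k*(-z)) : ℝ) : ℂ)
        = -∑ k ∈ Finset.Icc m n, c (k:ℤ) * ((Real.sin (k*(-z)) : ℝ) : ℂ) := by
      rw [← Finset.sum_neg_distrib]
      apply Finset.sum_congr rfl
      intro k _
      push_cast
      ring
    rw [h2, norm_neg]
    exact sine_estimate_core c N₀ M κ hMpos hκ hGM m₀ hm₀ hsmall
      (by linarith : 0 < -z) (by linarith) m n hm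
  · simp [hzero]
    positivity
  · exact sine_estimate_core c N₀ M κ hMpos hκ hGM m₀ hm₀ hsmall hpos hz2 m n hm

end este

section pairs
variable (c : ℤ → ℂ)

/-- difference of symmetric partial sums -/
lemma partial_diff (p q : ℕ) (h : q ≤ p) (x : ℝ) :
    (∑ k ∈ Finset.Icc (-(p:ℤ)) (p:ℤ), c k * Complex.exp ((k:ℂ) * (x:ℂ) * Complex.I))
      - (∑ k ∈ Finset.Icc (-(q:ℤ)) (q:ℤ), c k * Complex.exp ((k:ℂ) * (x:ℂ) * Complex.I))
    = ∑ k ∈ Finset.Icc (q+1) p,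
        ((c (k:ℤ) + c (-(k:ℤ))) * (Real.cos (k*x) : ℂ)
          + (c (k:ℤ) - c (-(k:ℤ))) * ((Real.sin (k*x) : ℂ) * Complex.I)) := by
  have hg : ∀ (r : ℕ), ∑ k ∈ Finset.Icc (-(r:ℤ)) (r:ℤ), c k * Complex.exp ((k:ℂ) * (x:ℂ) * Complex.I)
      = c 0 * Complex.exp ((0:ℂ) * (x:ℂ) * Complex.I)
        + ∑ k ∈ Finset.Icc 1 r,
            ((c (k:ℤ) + c (-(k:ℤ))) * (Real.cos (k*x) : ℂ)
              + (c (k:ℤ) - c (-(k:ℤ))) * ((Real.sin (k*x) : ℂ) * Complex.I)) := by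
    intro r
    rw [sum_Icc_symm (fun k => c k * Complex.exp ((k:ℂ) * (x:ℂ) * Complex.I)) r]
    simp only [Int.cast_zero]
    congr 1
    apply Finset.sum_congr rfl
    intro k _
    have := pair_eq c k x
    push_cast at this ⊢
    linear_combination this
  rw [hg p, hg q]
  have hsplit : Finset.Icc 1 p = Finset.Icc 1 q ∪ Finset.Icc (q+1) p := by
    ext k; simp only [Finset.mem_union, Finset.mem_Icc]; omega
  have hdisj : Disjoint (Finset.Icc 1 q) (Finset.Icc (q+1) p) := by
    rw [Finset.disjoint_left]; intro k h1 h2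
    simp only [Finset.mem_Icc] at h1 h2; omega
  rw [hsplit, Finset.sum_union hdisj]
  ring

/-- splitting the pair sum into cosine and sine parts -/
lemma pair_split (u v : ℕ) (x : ℝ) :
    ∑ k ∈ Finset.Icc u v,
        ((c (k:ℤ) + c (-(k:ℤ))) * (Real.cos (k*x) : ℂ)
          + (c (k:ℤ) - c (-(k:ℤ))) * ((Real.sin (k*x) : ℂ) * Complex.I))
    = (∑ k ∈ Finset.Icc u v, (c (k:ℤ) + c (-(k:ℤ))) * (Real.cos (k*x) : ℂ))
      + (∑ k ∈ Finset.Icc u v, (c (k:ℤ) - c (-(k:ℤ))) * (Real.sin (k*x) : ℂ)) * Complex.I := by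
  rw [Finset.sum_add_distrib, Finset.sum_mul]
  congr 1
  apply Finset.sum_congr rfl
  intro k _
  ring

/-- cosine part bound -/
lemma cos_part_bound (u v : ℕ) (x : ℝ) :
    ‖∑ k ∈ Finset.Icc u v, (c (k:ℤ) + c (-(k:ℤ))) * (Real.cos (k*x) : ℂ)‖
      ≤ ∑ k ∈ Finset.Icc u v, ‖c (k:ℤ) + c (-(k:ℤ))‖ := by
  calc ‖∑ k ∈ Finset.Icc u v, (c (k:ℤ) + c (-(k:ℤ))) * (Real.cos (k*x) : ℂ)‖
      ≤ ∑ k ∈ Finset.Icc u v, ‖(c (k:ℤ) + c (-(k:ℤ))) * (Real.cos (k*x) : ℂ)‖ :=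
        norm_sum_le _ _
    _ ≤ ∑ k ∈ Finset.Icc u v, ‖c (k:ℤ) + c (-(k:ℤ))‖ := by
        apply Finset.sum_le_sum
        intro k _
        rw [norm_mul, Complex.norm_real, Real.norm_eq_abs]
        calc ‖c (k:ℤ) + c (-(k:ℤ))‖ * |Real.cos (k*x)|
            ≤ ‖c (k:ℤ) + c (-(k:ℤ))‖ * 1 := by
              apply mul_le_mul_of_nonneg_left (Real.abs_cos_le_one _) (norm_nonneg _)
          _ = _ := mul_one _

/-- sine part bound by individual sine sums -/
lemma sin_part_bound (u v : ℕ) (x : ℝ) :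
    ‖∑ k ∈ Finset.Icc u v, (c (k:ℤ) - c (-(k:ℤ))) * (Real.sin (k*x) : ℂ)‖
      ≤ 2 * ‖∑ k ∈ Finset.Icc u v, c (k:ℤ) * (Real.sin (k*x) : ℂ)‖
        + ∑ k ∈ Finset.Icc u v, ‖c (k:ℤ) + c (-(k:ℤ))‖ := by
  have hid : ∑ k ∈ Finset.Icc u v, (c (k:ℤ) - c (-(k:ℤ))) * (Real.sin (k*x) : ℂ)
      = 2 * (∑ k ∈ Finset.Icc u v, c (k:ℤ) * (Real.sin (k*x) : ℂ))
        - ∑ k ∈ Finset.Icc u v, (c (k:ℤ) + c (-(k:ℤ))) * (Real.sin (k*x) : ℂ) := by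
    rw [Finset.mul_sum, ← Finset.sum_sub_distrib]
    apply Finset.sum_congr rfl
    intro k _
    ring
  rw [hid]
  calc ‖_‖ ≤ ‖2 * (∑ k ∈ Finset.Icc u v, c (k:ℤ) * (Real.sin (k*x) : ℂ))‖
        + ‖∑ k ∈ Finset.Icc u v, (c (k:ℤ) + c (-(k:ℤ))) * (Real.sin (k*x) : ℂ)‖ :=
      norm_sub_le _ _
    _ ≤ 2 * ‖∑ k ∈ Finset.Icc u v, c (k:ℤ) * (Real.sin (k*x) : ℂ)‖
        + ∑ k ∈ Finset.Icc u v, ‖c (k:ℤ) + c (-(k:ℤ))‖ := by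
      apply add_le_add
      · rw [norm_mul]
        norm_num
      · calc ‖∑ k ∈ Finset.Icc u v, (c (k:ℤ) + c (-(k:ℤ))) * (Real.sin (k*x) : ℂ)‖
            ≤ ∑ k ∈ Finset.Icc u v, ‖(c (k:ℤ) + c (-(k:ℤ))) * (Real.sin (k*x) : ℂ)‖ :=
              norm_sum_le _ _
          _ ≤ _ := by
              apply Finset.sum_le_sum
              intro k _
              rw [norm_mul, Complex.norm_real, Real.norm_eq_abs]
              calc ‖c (k:ℤ) + c (-(k:ℤ))‖ * |Real.sin (k*x)|
                  ≤ ‖c (k:ℤ) + c (-(k:ℤ))‖ * 1 := by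
                    apply mul_le_mul_of_nonneg_left (Real.abs_sin_le_one _) (norm_nonneg _)
                _ = _ := mul_one _

end pairs

/-- tail of a summable nonnegative series -/
lemma a_tail (g : ℕ → ℝ) (hg : ∀ i, 0 ≤ g i) (hsum : Summable g) {ε : ℝ} (hε : 0 < ε) :
    ∃ m₁ : ℕ, 1 ≤ m₁ ∧ ∀ m n : ℕ, m₁ ≤ m → ∑ k ∈ Finset.Icc m n, g (k-1) ≤ ε := by
  set s : ℕ → ℝ := fun N => ∑ i ∈ Finset.range N, g i with hs
  have htend : Tendsto s atTop (nhds (∑' i, g i)) := hsum.hasSum.tendsto_sum_nat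
  have hmono : Monotone s := by
    intro p q hpq
    apply Finset.sum_le_sum_of_subset_of_nonneg (Finset.range_subset_range.2 hpq)
    intro i _ _; exact hg i
  have hle : ∀ N, s N ≤ ∑' i, g i := hmono.ge_of_tendsto htend
  obtain ⟨N₁, hN₁⟩ := (Metric.tendsto_atTop.mp htend) ε hε
  refine ⟨N₁ + 1, by omega, ?_⟩
  intro m n hm
  have hre : ∑ k ∈ Finset.Icc m n, g (k-1) = ∑ i ∈ Finset.Ico (m-1) n, g i := by
    apply Finset.sum_nbij' (fun k => k - 1) (fun i => i + 1)
    · intro k hk; simp only [Finset.mem_Icc] at hk; simp only [Finset.mem_Ico]; omega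
    · intro i hi; simp only [Finset.mem_Ico] at hi; simp only [Finset.mem_Icc]; omega
    · intro k hk; simp only [Finset.mem_Icc] at hk; omega
    · intro i hi; omega
    · intro k _; rfl
  rw [hre]
  rcases le_or_gt (m-1) n with hmn | hmn
  · rw [Finset.sum_Ico_eq_sub _ hmn]
    have h1 := hN₁ (m-1) (by omega)
    rw [Real.dist_eq] at h1
    have h2 := hle n
    have := abs_lt.mp h1
    linarith [this.1, this.2]
  · rw [Finset.Ico_eq_empty (by omega)]
    simp only [Finset.sum_empty]
    linarith

section suff
variable (c : ℤ → ℂ)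

/-- the sufficiency direction -/
lemma sufficiency (N₀ : ℕ) (M : ℝ) (hMpos : 0 < M)
    (hGM : ∀ m W, 1 ≤ m → (∀ k, m ≤ k → k < m + N₀ → ‖c (k:ℤ)‖ ≤ W) →
      ∑ j ∈ Finset.Icc m (2*m), ‖c (j:ℤ) - c ((j:ℤ)+1)‖ ≤ M * W)
    (htend : Tendsto (fun n : ℕ => (n:ℝ) * ‖c (n:ℤ)‖) atTop (nhds 0))
    (hsumA : Summable (fun n : ℕ => ‖c ((n:ℤ) + 1) + c (-((n:ℤ) + 1))‖)) :
    ∃ f : ℝ → ℂ, Continuous f ∧ Function.Periodic f (2 * Real.pi) ∧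
      TendstoUniformly
        (fun (n : ℕ) (x : ℝ) =>
          ∑ k ∈ Finset.Icc (-(n : ℤ)) (n : ℤ), c k * Complex.exp ((k : ℂ) * (x : ℂ) * Complex.I))
        f atTop := by
  have hπ := Real.pi_pos
  set S : ℕ → ℝ → ℂ := fun n x =>
    ∑ k ∈ Finset.Icc (-(n : ℤ)) (n : ℤ), c k * Complex.exp ((k : ℂ) * (x : ℂ) * Complex.I)
    with hS
  set C : ℝ := 1 + Real.pi + (1+2*M)*Real.pi with hC
  have hCpos : 0 < C := by rw [hC]; positivity
  -- uniform Cauchy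
  have hUC : UniformCauchySeqOn S atTop Set.univ := by
    rw [Metric.uniformCauchySeqOn_iff]
    intro ε hε
    set κ : ℝ := ε / (8*C) with hκdef
    have hκ : 0 < κ := by positivity
    obtain ⟨m₀', hm₀'⟩ := (Metric.tendsto_atTop.mp htend) κ hκ
    set m₀ : ℕ := max m₀' 1 with hm₀def
    have hm₀1 : 1 ≤ m₀ := le_max_right _ _
    have hsmall : ∀ k : ℕ, m₀ ≤ k → (k:ℝ) * ‖c (k:ℤ)‖ ≤ κ := by
      intro k hk
      have := hm₀' k (le_trans (le_max_left _ _) hk)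
      rw [Real.dist_eq, sub_zero] at this
      calc (k:ℝ) * ‖c (k:ℤ)‖ ≤ |(k:ℝ) * ‖c (k:ℤ)‖| := le_abs_self _
        _ ≤ κ := this.le
    obtain ⟨m₁, hm₁1, hm₁⟩ := a_tail (fun n => ‖c ((n:ℤ) + 1) + c (-((n:ℤ) + 1))‖)
      (fun i => norm_nonneg _) hsumA (show (0:ℝ) < ε/8 by positivity)
    have hAtail : ∀ m n : ℕ, m₁ ≤ m →
        ∑ k ∈ Finset.Icc m n, ‖c (k:ℤ) + c (-(k:ℤ))‖ ≤ ε/8 := by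
      intro m n hm
      have := hm₁ m n hm
      have heq : ∑ k ∈ Finset.Icc m n,
          (fun n : ℕ => ‖c ((n:ℤ) + 1) + c (-((n:ℤ) + 1))‖) (k-1)
          = ∑ k ∈ Finset.Icc m n, ‖c (k:ℤ) + c (-(k:ℤ))‖ := by
        apply Finset.sum_congr rfl
        intro k hk
        simp only [Finset.mem_Icc] at hk
        have hk1 : 1 ≤ k := le_trans hm₁1 (le_trans hm hk.1)
        have h1 : ((k-1:ℕ):ℤ) + 1 = (k:ℤ) := by omega
        simp only [h1]
      rw [heq] at this
      exact this
    refine ⟨max m₀ m₁, ?_⟩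
    intro p hp q hq x _
    -- wlog q ≤ p
    have key : ∀ p q : ℕ, max m₀ m₁ ≤ p → max m₀ m₁ ≤ q → q ≤ p →
        dist (S p x) (S q x) < ε := by
      intro p q hp hq hqp
      rw [Complex.dist_eq, hS]
      rw [partial_diff c p q hqp x, pair_split c]
      have hq1m₀ : m₀ ≤ q + 1 := by
        have := le_trans (le_max_left m₀ m₁) hq; omega
      have hq1m₁ : m₁ ≤ q + 1 := by
        have := le_trans (le_max_right m₀ m₁) hq; omega
      have hA := hAtail (q+1) p hq1m₁
      have hsin := sine_estimate c N₀ M κ hMpos hκ hGM m₀ hm₀1 hsmall (q+1) p hq1m₀ x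
      have hb := sin_part_bound c (q+1) p x
      have hcos := cos_part_bound c (q+1) p x
      calc ‖(∑ k ∈ Finset.Icc (q+1) p, (c (k:ℤ) + c (-(k:ℤ))) * (Real.cos (k*x) : ℂ))
            + (∑ k ∈ Finset.Icc (q+1) p, (c (k:ℤ) - c (-(k:ℤ))) * (Real.sin (k*x) : ℂ)) * Complex.I‖
          ≤ ‖∑ k ∈ Finset.Icc (q+1) p, (c (k:ℤ) + c (-(k:ℤ))) * (Real.cos (k*x) : ℂ)‖
            + ‖(∑ k ∈ Finset.Icc (q+1) p, (c (k:ℤ) - c (-(k:ℤ))) * (Real.sin (k*x) : ℂ)) * Complex.I‖ :=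
            norm_add_le _ _
        _ = ‖∑ k ∈ Finset.Icc (q+1) p, (c (k:ℤ) + c (-(k:ℤ))) * (Real.cos (k*x) : ℂ)‖
            + ‖∑ k ∈ Finset.Icc (q+1) p, (c (k:ℤ) - c (-(k:ℤ))) * (Real.sin (k*x) : ℂ)‖ := by
            rw [norm_mul, Complex.norm_I, mul_one]
        _ ≤ (ε/8) + (2 * (C * κ) + ε/8) := by
            apply add_le_add (le_trans hcos hA)
            apply le_trans hb
            apply add_le_add _ hA
            have : ‖∑ k ∈ Finset.Icc (q+1) p, c (k:ℤ) * (Real.sin (k*x) : ℂ)‖ ≤ C * κ := hsin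
            linarith
        _ < ε := by
            rw [hκdef]
            have : C * (ε / (8*C)) = ε/8 := by field_simp
            rw [this]
            linarith
    rcases le_total q p with h | h
    · exact key p q hp hq h
    · rw [dist_comm]; exact key q p hq hp h
  -- pointwise limit
  have hcauchy : ∀ x : ℝ, CauchySeq (fun n => S n x) :=
    fun x => hUC.cauchySeq (Set.mem_univ x)
  set f : ℝ → ℂ := fun x => limUnder atTop (fun n => S n x) with hf
  have hptwise : ∀ x : ℝ, Tendsto (fun n => S n x) atTop (nhds (f x)) :=
    fun x => (hcauchy x).tendsto_limUnder
  have hTU : TendstoUniformly S f atTop := by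
    rw [← tendstoUniformlyOn_univ]
    exact hUC.tendstoUniformlyOn_of_tendsto (fun x _ => hptwise x)
  have hScont : ∀ n, Continuous (S n) := by
    intro n
    apply continuous_finset_sum
    intro k _
    apply Continuous.mul continuous_const
    apply Complex.continuous_exp.comp
    exact (continuous_const.mul Complex.continuous_ofReal).mul continuous_const
  have hSper : ∀ n x, S n (x + 2*Real.pi) = S n x := by
    intro n x
    apply Finset.sum_congr rfl
    intro k _
    congr 1
    rw [show ((k:ℂ) * (((x + 2*Real.pi : ℝ)):ℂ) * Complex.I)
        = (k:ℂ) * (x:ℂ) * Complex.I + (k:ℂ) * (2*(Real.pi:ℂ)*Complex.I) by push_cast; ring]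
    rw [Complex.exp_add, Complex.exp_int_mul_two_pi_mul_I, mul_one]
  refine ⟨f, hTU.continuous (Eventually.of_forall hScont).frequently, ?_, hTU⟩
  intro x
  exact tendsto_nhds_unique (by simpa only [hSper] using hptwise (x + 2*Real.pi)) (hptwise x)

end suff

section nec
variable (c : ℤ → ℂ)

/-- a-tail in convenient form -/
lemma a_tail' (hsumA : Summable (fun n : ℕ => ‖c ((n:ℤ) + 1) + c (-((n:ℤ) + 1))‖))
    {ε : ℝ} (hε : 0 < ε) :
    ∃ m₁ : ℕ, 1 ≤ m₁ ∧ ∀ m n : ℕ, m₁ ≤ m →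
      ∑ k ∈ Finset.Icc m n, ‖c (k:ℤ) + c (-(k:ℤ))‖ ≤ ε := by
  obtain ⟨m₁, hm₁1, hm₁⟩ := a_tail (fun n => ‖c ((n:ℤ) + 1) + c (-((n:ℤ) + 1))‖)
    (fun i => norm_nonneg _) hsumA hε
  refine ⟨m₁, hm₁1, ?_⟩
  intro m n hm
  have := hm₁ m n hm
  have heq : ∑ k ∈ Finset.Icc m n,
      (fun n : ℕ => ‖c ((n:ℤ) + 1) + c (-((n:ℤ) + 1))‖) (k-1)
      = ∑ k ∈ Finset.Icc m n, ‖c (k:ℤ) + c (-(k:ℤ))‖ := by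
    apply Finset.sum_congr rfl
    intro k hk
    simp only [Finset.mem_Icc] at hk
    have hk1 : 1 ≤ k := le_trans hm₁1 (le_trans hm hk.1)
    have h1 : ((k-1:ℕ):ℤ) + 1 = (k:ℤ) := by omega
    simp only [h1]
  rw [heq] at this
  exact this

/-- necessity: summability of the cosine coefficients -/
lemma necessity_summable (θ₀ : ℝ) (hθ₀ : 0 ≤ θ₀) (hθ₁ : θ₀ < Real.pi / 2)
    (h4 : ∀ n : ℤ, 1 ≤ n → |(c n + c (-n)).arg| ≤ θ₀)
    (f : ℝ → ℂ)
    (hf : TendstoUniformly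
        (fun (n : ℕ) (x : ℝ) =>
          ∑ k ∈ Finset.Icc (-(n : ℤ)) (n : ℤ), c k * Complex.exp ((k : ℂ) * (x : ℂ) * Complex.I))
        f atTop) :
    Summable (fun n : ℕ => ‖c ((n:ℤ) + 1) + c (-((n:ℤ) + 1))‖) := by
  have hcos := cos_theta_pos hθ₀ hθ₁
  have htend0 := hf.tendsto_at 0
  have h1 : ∀ n : ℕ, ∑ k ∈ Finset.Icc (-(n : ℤ)) (n : ℤ),
      c k * Complex.exp ((k : ℂ) * ((0:ℝ) : ℂ) * Complex.I)
      = c 0 + ∑ k ∈ Finset.Icc 1 n, (c (k:ℤ) + c (-(k:ℤ))) := by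
    intro n
    rw [sum_Icc_symm]
    simp only [Complex.ofReal_zero, mul_zero, zero_mul, Complex.exp_zero, mul_one]
  simp only [h1] at htend0
  have htend1 : Tendsto (fun n : ℕ => ∑ k ∈ Finset.Icc 1 n, (c (k:ℤ) + c (-(k:ℤ))))
      atTop (nhds (f 0 - c 0)) := by
    have := htend0.sub_const (c 0)
    simpa using this
  have htendre : Tendsto (fun n : ℕ => ∑ k ∈ Finset.Icc 1 n, ((c (k:ℤ) + c (-(k:ℤ))).re))
      atTop (nhds ((f 0 - c 0).re)) := by
    have h2 := (Complex.continuous_re.tendsto _).comp htend1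
    have h3 : (fun n : ℕ => (∑ k ∈ Finset.Icc (1:ℕ) n, (c (k:ℤ) + c (-(k:ℤ)))).re)
        = fun n : ℕ => ∑ k ∈ Finset.Icc (1:ℕ) n, ((c (k:ℤ) + c (-(k:ℤ))).re) := by
      funext n; rw [Complex.re_sum]
    rw [← h3]
    exact h2
  set r : ℕ → ℝ := fun i => (c ((i:ℤ)+1) + c (-((i:ℤ)+1))).re with hr
  have hidx : ∀ n : ℕ, ∑ i ∈ Finset.range n, r i
      = ∑ k ∈ Finset.Icc 1 n, ((c (k:ℤ) + c (-(k:ℤ))).re) := by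
    intro n
    apply Finset.sum_nbij' (fun i => i + 1) (fun k => k - 1)
    · intro i hi; simp only [Finset.mem_range] at hi; simp only [Finset.mem_Icc]; omega
    · intro k hk; simp only [Finset.mem_Icc] at hk; simp only [Finset.mem_range]; omega
    · intro i _; omega
    · intro k hk; simp only [Finset.mem_Icc] at hk; omega
    · intro i _
      rw [hr]
      have : ((i+1:ℕ):ℤ) = (i:ℤ)+1 := by push_cast; ring
      simp only [this]
  have hrtend : Tendsto (fun n : ℕ => ∑ i ∈ Finset.range n, r i) atTop
      (nhds ((f 0 - c 0).re)) := by
    simp only [hidx]; exact htendre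
  have hrnonneg : ∀ i, 0 ≤ r i := by
    intro i
    have hsec := sector hθ₀ hθ₁ (h4 ((i:ℤ)+1) (by omega))
    have := norm_nonneg (c ((i:ℤ)+1) + c (-((i:ℤ)+1)))
    nlinarith
  have hmono : Monotone (fun n : ℕ => ∑ i ∈ Finset.range n, r i) := by
    intro p q hpq
    apply Finset.sum_le_sum_of_subset_of_nonneg (Finset.range_subset_range.2 hpq)
    intro i _ _; exact hrnonneg i
  have hbdd : ∀ n, ∑ i ∈ Finset.range n, r i ≤ (f 0 - c 0).re :=
    hmono.ge_of_tendsto hrtend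
  have hsumr : Summable r := summable_of_sum_range_le hrnonneg hbdd
  apply Summable.of_nonneg_of_le (fun i => norm_nonneg _)
    (g := fun i => ‖c ((i:ℤ) + 1) + c (-((i:ℤ) + 1))‖)
    (f := fun i => (1/Real.cos θ₀) * r i)
  · intro i
    show ‖c ((i:ℤ) + 1) + c (-((i:ℤ) + 1))‖ ≤ (1/Real.cos θ₀) * r i
    have hsec := sector hθ₀ hθ₁ (h4 ((i:ℤ)+1) (by omega))
    have hri : r i = (c ((i:ℤ)+1) + c (-((i:ℤ)+1))).re := rfl
    have h3 : (1/Real.cos θ₀) * r i = r i / Real.cos θ₀ := by ring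
    rw [h3, le_div_iff₀ hcos, hri]
    nlinarith
  · exact hsumr.mul_left _

/-- block smallness of ∑|c_k| over [m, 2m] -/
lemma block_T_small (θ₀ : ℝ) (hθ₀ : 0 ≤ θ₀) (hθ₁ : θ₀ < Real.pi / 2)
    (h4 : ∀ n : ℤ, 1 ≤ n → |(c n + c (-n)).arg| ≤ θ₀ ∧ |(c n - c (-n)).arg| ≤ θ₀)
    (f : ℝ → ℂ)
    (hf : TendstoUniformly
        (fun (n : ℕ) (x : ℝ) =>
          ∑ k ∈ Finset.Icc (-(n : ℤ)) (n : ℤ), c k * Complex.exp ((k : ℂ) * (x : ℂ) * Complex.I))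
        f atTop)
    {ε : ℝ} (hε : 0 < ε) :
    ∃ m₃ : ℕ, 1 ≤ m₃ ∧ ∀ m : ℕ, m₃ ≤ m →
      ∑ k ∈ Finset.Icc m (2*m), ‖c (k:ℤ)‖ ≤ ε := by
  have hπ := Real.pi_pos
  have hcos := cos_theta_pos hθ₀ hθ₁
  have hcos1 : Real.cos θ₀ ≤ 1 := Real.cos_le_one _
  set δ : ℝ := ε * Real.cos θ₀ / 8 with hδdef
  have hδ : 0 < δ := by positivity
  have hsumA := necessity_summable c θ₀ hθ₀ hθ₁ (fun n hn => (h4 n hn).1) f hf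
  obtain ⟨m₁, hm₁1, hAtail⟩ := a_tail' c hsumA hδ
  obtain ⟨N, hN⟩ := (Metric.tendstoUniformly_iff.mp hf (δ/2) (by positivity)).exists_forall_of_atTop
  refine ⟨max (N+1) m₁, by omega, ?_⟩
  intro m hm
  have hm1 : 1 ≤ m := by omega
  have hmN : N ≤ m - 1 := by omega
  have hmm₁ : m₁ ≤ m := by omega
  have hmr : (0:ℝ) < m := by exact_mod_cast hm1
  set x : ℝ := Real.pi/(4*m) with hxdef
  set S : ℕ → ℝ → ℂ := fun n x =>
    ∑ k ∈ Finset.Icc (-(n : ℤ)) (n : ℤ), c k * Complex.exp ((k : ℂ) * (x : ℂ) * Complex.I)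
    with hS
  have hA : ∑ k ∈ Finset.Icc m (2*m), ‖c (k:ℤ) + c (-(k:ℤ))‖ ≤ δ :=
    hAtail m (2*m) hmm₁
  have hpair : ‖∑ k ∈ Finset.Icc m (2*m),
      ((c (k:ℤ) + c (-(k:ℤ))) * (Real.cos (k*x) : ℂ)
        + (c (k:ℤ) - c (-(k:ℤ))) * ((Real.sin (k*x) : ℂ) * Complex.I))‖ ≤ δ := by
    have hpd := partial_diff c (2*m) (m-1) (by omega) x
    have hidx : (m-1)+1 = m := by omega
    rw [hidx] at hpd
    rw [← hpd, ← Complex.dist_eq]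
    have hd1 := hN (2*m) (by omega) x
    have hd2 := hN (m-1) hmN x
    calc dist (S (2*m) x) (S (m-1) x)
        ≤ dist (S (2*m) x) (f x) + dist (f x) (S (m-1) x) := dist_triangle _ _ _
      _ ≤ δ/2 + δ/2 := by
          rw [dist_comm (S (2*m) x) (f x)]
          exact add_le_add hd1.le hd2.le
      _ = δ := by ring
  have hsplit := pair_split c m (2*m) x
  set cossum := ∑ k ∈ Finset.Icc m (2*m), (c (k:ℤ) + c (-(k:ℤ))) * (Real.cos (k*x) : ℂ)
    with hcossum
  set sinsum := ∑ k ∈ Finset.Icc m (2*m), (c (k:ℤ) - c (-(k:ℤ))) * (Real.sin (k*x) : ℂ)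
    with hsinsum
  have habs_sin : ‖sinsum‖ ≤ 2*δ := by
    have h1 : sinsum * Complex.I = (cossum + sinsum * Complex.I) - cossum := by ring
    have h2 : ‖sinsum * Complex.I‖ = ‖sinsum‖ := by
      rw [norm_mul, Complex.norm_I, mul_one]
    rw [← h2, h1]
    calc ‖(cossum + sinsum * Complex.I) - cossum‖
        ≤ ‖cossum + sinsum * Complex.I‖ + ‖cossum‖ :=
          norm_sub_le _ _
      _ ≤ δ + δ := by
          apply add_le_add
          · rw [← hsplit]; exact hpair
          · exact le_trans (cos_part_bound c m (2*m) x) hA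
      _ = 2*δ := by ring
  have hsin_lb : ∀ k ∈ Finset.Icc m (2*m), (1/2 : ℝ) ≤ Real.sin (k * x) := by
    intro k hk
    simp only [Finset.mem_Icc] at hk
    have hk1 : (m:ℝ) ≤ k := by exact_mod_cast hk.1
    have hk2 : (k:ℝ) ≤ 2*m := by exact_mod_cast hk.2
    have hq1 : (m:ℝ)*(Real.pi/(4*m)) = Real.pi/4 := by field_simp
    have hq2 : (2*(m:ℝ))*(Real.pi/(4*m)) = Real.pi/2 := by field_simp; ring
    have hxpos : (0:ℝ) < Real.pi/(4*m) := by positivity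
    have ht1 : Real.pi/4 ≤ (k:ℝ)*x := by
      rw [hxdef, ← hq1]
      exact mul_le_mul_of_nonneg_right hk1 hxpos.le
    have ht2 : (k:ℝ)*x ≤ Real.pi/2 := by
      rw [hxdef, ← hq2]
      exact mul_le_mul_of_nonneg_right hk2 hxpos.le
    have hj := Real.mul_le_sin (x := (k:ℝ)*x) (by linarith) ht2
    have h5 : (1/2:ℝ) = 2/Real.pi * (Real.pi/4) := by field_simp; norm_num
    have h6 : 2/Real.pi * (Real.pi/4) ≤ 2/Real.pi * ((k:ℝ)*x) :=
      mul_le_mul_of_nonneg_left ht1 (by positivity)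
    linarith
  have hre : sinsum.re = ∑ k ∈ Finset.Icc m (2*m), (c (k:ℤ) - c (-(k:ℤ))).re * Real.sin (k*x) := by
    rw [hsinsum, Complex.re_sum]
    apply Finset.sum_congr rfl
    intro k _
    simp [Complex.mul_re, -Complex.ofReal_sin]
  have hsumb : Real.cos θ₀ * (∑ k ∈ Finset.Icc m (2*m), ‖c (k:ℤ) - c (-(k:ℤ))‖) * (1/2)
      ≤ 2*δ := by
    have hstep : ∀ k ∈ Finset.Icc m (2*m),
        Real.cos θ₀ * ‖c (k:ℤ) - c (-(k:ℤ))‖ * (1/2)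
          ≤ (c (k:ℤ) - c (-(k:ℤ))).re * Real.sin (k*x) := by
      intro k hk
      simp only [Finset.mem_Icc] at hk
      have hk1 : 1 ≤ k := le_trans hm1 hk.1
      have hsec := sector hθ₀ hθ₁ (h4 (k:ℤ) (by exact_mod_cast hk1)).2
      have hsl := hsin_lb k (by simp only [Finset.mem_Icc]; omega)
      have habs0 := norm_nonneg (c (k:ℤ) - c (-(k:ℤ)))
      have hre0 : 0 ≤ (c (k:ℤ) - c (-(k:ℤ))).re := le_trans (by positivity) hsec
      have hsin1 : Real.sin (k*x) ≤ 1 := Real.sin_le_one _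
      nlinarith
    calc Real.cos θ₀ * (∑ k ∈ Finset.Icc m (2*m), ‖c (k:ℤ) - c (-(k:ℤ))‖) * (1/2)
        = ∑ k ∈ Finset.Icc m (2*m), Real.cos θ₀ * ‖c (k:ℤ) - c (-(k:ℤ))‖ * (1/2) := by
          rw [Finset.mul_sum, Finset.sum_mul]
      _ ≤ ∑ k ∈ Finset.Icc m (2*m), (c (k:ℤ) - c (-(k:ℤ))).re * Real.sin (k*x) :=
          Finset.sum_le_sum hstep
      _ = sinsum.re := hre.symm
      _ ≤ |sinsum.re| := le_abs_self _
      _ ≤ ‖sinsum‖ := Complex.abs_re_le_norm _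
      _ ≤ 2*δ := habs_sin
  have hB : ∑ k ∈ Finset.Icc m (2*m), ‖c (k:ℤ) - c (-(k:ℤ))‖ ≤ 4*δ/Real.cos θ₀ := by
    rw [le_div_iff₀ hcos]
    nlinarith
  calc ∑ k ∈ Finset.Icc m (2*m), ‖c (k:ℤ)‖
      ≤ ∑ k ∈ Finset.Icc m (2*m),
          ((‖c (k:ℤ) + c (-(k:ℤ))‖ + ‖c (k:ℤ) - c (-(k:ℤ))‖)/2) := by
        apply Finset.sum_le_sum
        intro k _
        have hck : c (k:ℤ) = ((c (k:ℤ) + c (-(k:ℤ))) + (c (k:ℤ) - c (-(k:ℤ))))/2 := by ring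
        calc ‖c (k:ℤ)‖
            = ‖((c (k:ℤ) + c (-(k:ℤ))) + (c (k:ℤ) - c (-(k:ℤ))))/2‖ := by rw [← hck]
          _ ≤ _ := by
              rw [norm_div, Complex.norm_two]
              gcongr <;> exact norm_add_le _ _
    _ = ((∑ k ∈ Finset.Icc m (2*m), ‖c (k:ℤ) + c (-(k:ℤ))‖)
        + ∑ k ∈ Finset.Icc m (2*m), ‖c (k:ℤ) - c (-(k:ℤ))‖)/2 := by
        rw [← Finset.sum_add_distrib, Finset.sum_div]
    _ ≤ (δ + 4*δ/Real.cos θ₀)/2 := by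
        have := add_le_add hA hB
        linarith
    _ ≤ ε := by
        rw [hδdef]
        rw [div_le_iff₀ (by norm_num : (0:ℝ) < 2)] at *
        have h4c : 4*(ε * Real.cos θ₀ / 8)/Real.cos θ₀ = ε/2 := by field_simp; ring
        nlinarith

end nec

/-- combinatorial lemma: GM forces many large terms -/
lemma comb (c : ℤ → ℂ) (N₀ : ℕ) (hN₀ : 0 < N₀) (M : ℝ) (hMpos : 0 < M)
    (hGM2 : ∀ m : ℕ, 1 ≤ m → ∃ k : ℕ, m ≤ k ∧ k < m + N₀ ∧
      ∑ j ∈ Finset.Icc m (2*m), ‖c (j:ℤ) - c ((j:ℤ)+1)‖ ≤ M * ‖c (k:ℤ)‖)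
    (n : ℕ) (hn : 4*N₀ ≤ n) :
    (n:ℝ) * ‖c (n:ℤ)‖
      ≤ 4*(N₀:ℝ)*(1+M) * ∑ k ∈ Finset.Icc (n/2+1) n, ‖c (k:ℤ)‖ := by
  have hn1 : 1 ≤ n := by omega
  set m₂ : ℕ := n/2+1 with hm₂
  set s : ℕ := n + 1 - m₂ with hs
  set q : ℕ := s / N₀ with hq
  have hn2m : n ≤ 2*m₂ := by omega
  have hqN : q * N₀ ≤ s := Nat.div_mul_le_self s N₀
  have hM1 : (0:ℝ) < 1+M := by linarith
  have hkey : ∀ i : ℕ, ∃ k : ℕ, i < q →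
      (m₂ + i*N₀ ≤ k ∧ k < m₂ + i*N₀ + N₀ ∧ k ≤ n ∧
        ‖c (n:ℤ)‖ ≤ (1+M) * ‖c (k:ℤ)‖) := by
    intro i
    rcases lt_or_ge i q with hi | hi
    · set m' : ℕ := m₂ + i*N₀ with hm'
      obtain ⟨k, hk1, hk2, hk3⟩ := hGM2 m' (by omega)
      have hiq : (i+1)*N₀ ≤ q*N₀ := Nat.mul_le_mul_right N₀ (by omega)
      have hkn : k ≤ n := by
        have h1 : (i+1)*N₀ = i*N₀ + N₀ := by ring
        omega
      have hm'n : n ≤ 2*m' := by omega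
      have htel := telescope c hkn
      have habs : ‖c (n:ℤ)‖ ≤ ‖c (k:ℤ)‖
          + ∑ j ∈ Finset.Icc m' (2*m'), ‖c (j:ℤ) - c ((j:ℤ)+1)‖ := by
        have h2 : ‖c (n:ℤ)‖ ≤ ‖c (k:ℤ)‖
            + ‖∑ j ∈ Finset.Ico k n, (c (j:ℤ) - c ((j:ℤ)+1))‖ := by
          calc ‖c (n:ℤ)‖
              = ‖c (k:ℤ) - ∑ j ∈ Finset.Ico k n, (c (j:ℤ) - c ((j:ℤ)+1))‖ := by
                rw [htel]; congr 1; ring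
            _ ≤ _ := norm_sub_le _ _
        apply le_trans h2
        apply add_le_add le_rfl
        calc ‖∑ j ∈ Finset.Ico k n, (c (j:ℤ) - c ((j:ℤ)+1))‖
            ≤ ∑ j ∈ Finset.Ico k n, ‖c (j:ℤ) - c ((j:ℤ)+1)‖ := norm_sum_le _ _
          _ ≤ ∑ j ∈ Finset.Icc m' (2*m'), ‖c (j:ℤ) - c ((j:ℤ)+1)‖ := by
              apply Finset.sum_le_sum_of_subset_of_nonneg
              · intro j hj
                simp only [Finset.mem_Ico] at hj
                simp only [Finset.mem_Icc]
                omega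
              · intro _ _ _; exact norm_nonneg _
      exact ⟨k, fun _ => ⟨hk1, hk2, hkn, by nlinarith [hk3, habs]⟩⟩
    · exact ⟨0, fun h => absurd h (by omega)⟩
  choose φ hφ using hkey
  have hinj : ∀ i ∈ Finset.range q, ∀ j ∈ Finset.range q, φ i = φ j → i = j := by
    intro i hi j hj hij
    simp only [Finset.mem_range] at hi hj
    obtain ⟨h1a, h1b, -, -⟩ := hφ i hi
    obtain ⟨h2a, h2b, -, -⟩ := hφ j hj
    rw [hij] at h1a h1b
    have hij1 : i*N₀ < (j+1)*N₀ := by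
      have : (j+1)*N₀ = j*N₀ + N₀ := by ring
      omega
    have hji1 : j*N₀ < (i+1)*N₀ := by
      have : (i+1)*N₀ = i*N₀ + N₀ := by ring
      omega
    have h3 : i < j+1 := lt_of_mul_lt_mul_right hij1 (Nat.zero_le N₀)
    have h4 : j < i+1 := lt_of_mul_lt_mul_right hji1 (Nat.zero_le N₀)
    omega
  have himg : ∑ i ∈ Finset.range q, ‖c ((φ i : ℕ):ℤ)‖
      ≤ ∑ k ∈ Finset.Icc m₂ n, ‖c (k:ℤ)‖ := by
    rw [← Finset.sum_image (f := fun k : ℕ => ‖c (k:ℤ)‖) (g := φ) hinj]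
    apply Finset.sum_le_sum_of_subset_of_nonneg
    · intro k hk
      simp only [Finset.mem_image, Finset.mem_range] at hk
      obtain ⟨i, hi, rfl⟩ := hk
      obtain ⟨h1a, -, h1c, -⟩ := hφ i hi
      simp only [Finset.mem_Icc]
      omega
    · intro _ _ _; exact norm_nonneg _
  have hlow : (q:ℝ) * (‖c (n:ℤ)‖ / (1+M))
      ≤ ∑ i ∈ Finset.range q, ‖c ((φ i : ℕ):ℤ)‖ := by
    have := Finset.card_nsmul_le_sum (Finset.range q)
      (fun i => ‖c ((φ i : ℕ):ℤ)‖) (‖c (n:ℤ)‖ / (1+M)) ?_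
    · rw [Finset.card_range, nsmul_eq_mul] at this
      exact this
    · intro i hi
      simp only [Finset.mem_range] at hi
      obtain ⟨-, -, -, h1d⟩ := hφ i hi
      rw [div_le_iff₀ hM1]
      nlinarith
  -- arithmetic: n ≤ 4*(N₀*q)
  have hqn : n ≤ 4*(N₀*q) := by
    have hdm : N₀ * (s/N₀) + s % N₀ = s := Nat.div_add_mod s N₀
    have hrlt : s % N₀ < N₀ := Nat.mod_lt _ hN₀
    obtain ⟨t, ht⟩ : ∃ t, N₀ * q = t := ⟨_, rfl⟩
    rw [ht]
    rw [hq] at ht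
    omega
  have habs0 : (0:ℝ) ≤ ‖c (n:ℤ)‖ := norm_nonneg _
  have hq' : (q:ℝ) * ‖c (n:ℤ)‖
      ≤ (1+M) * ∑ k ∈ Finset.Icc m₂ n, ‖c (k:ℤ)‖ := by
    calc (q:ℝ) * ‖c (n:ℤ)‖
        = ((q:ℝ) * (‖c (n:ℤ)‖ / (1+M))) * (1+M) := by field_simp
      _ ≤ (∑ k ∈ Finset.Icc m₂ n, ‖c (k:ℤ)‖) * (1+M) := by
          apply mul_le_mul_of_nonneg_right (le_trans hlow himg) hM1.le
      _ = (1+M) * ∑ k ∈ Finset.Icc m₂ n, ‖c (k:ℤ)‖ := by ring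
  have hncast : (n:ℝ) ≤ 4*(N₀:ℝ)*q := by
    have : (n:ℝ) ≤ ((4*(N₀*q) : ℕ):ℝ) := by exact_mod_cast hqn
    push_cast at this
    linarith
  calc (n:ℝ) * ‖c (n:ℤ)‖
      ≤ (4*(N₀:ℝ)*q) * ‖c (n:ℤ)‖ :=
        mul_le_mul_of_nonneg_right hncast habs0
    _ = 4*(N₀:ℝ) * ((q:ℝ) * ‖c (n:ℤ)‖) := by ring
    _ ≤ 4*(N₀:ℝ) * ((1+M) * ∑ k ∈ Finset.Icc m₂ n, ‖c (k:ℤ)‖) := by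
        apply mul_le_mul_of_nonneg_left hq' (by positivity)
    _ = 4*(N₀:ℝ)*(1+M) * ∑ k ∈ Finset.Icc m₂ n, ‖c (k:ℤ)‖ := by ring

end Thm1

open Thm1

/-- Theorem 1 of the paper: under the sector condition (4) and condition (2*),
uniform convergence of the symmetric partial sums to a continuous 2π-periodic
function is equivalent to `n·cₙ → 0` together with `∑ |cₙ + c₋ₙ| < ∞`. -/
theorem theorem1 (c : ℤ → ℂ) (θ₀ : ℝ) (hθ₀ : 0 ≤ θ₀) (hθ₁ : θ₀ < Real.pi / 2)
    (h4 : ∀ n : ℤ, 1 ≤ n →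
      |(c n + c (-n)).arg| ≤ θ₀ ∧ |(c n - c (-n)).arg| ≤ θ₀)
    (h2star : ∃ N₀ : ℕ, ∃ hN₀ : 0 < N₀, ∃ M : ℝ, 0 < M ∧ ∀ m : ℕ, 1 ≤ m →
      ∑ n ∈ Finset.Icc m (2 * m), ‖c (n : ℤ) - c ((n : ℤ) + 1)‖ ≤
        M * (Finset.Ico m (m + N₀)).sup' (Finset.nonempty_Ico.mpr (by omega))
          (fun n => ‖c (n : ℤ)‖)) :
    (∃ f : ℝ → ℂ, Continuous f ∧ Function.Periodic f (2 * Real.pi) ∧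
        TendstoUniformly
          (fun (n : ℕ) (x : ℝ) =>
            ∑ k ∈ Finset.Icc (-(n : ℤ)) (n : ℤ), c k * Complex.exp ((k : ℂ) * (x : ℂ) * Complex.I))
          f atTop)
      ↔
    (Tendsto (fun n : ℕ => (n : ℂ) * c (n : ℤ)) atTop (nhds 0) ∧
      Summable (fun n : ℕ => ‖c ((n : ℤ) + 1) + c (-((n : ℤ) + 1))‖)) := by
  obtain ⟨N₀, hN₀, M, hM, h2⟩ := h2star
  constructor
  · rintro ⟨f, hfc, hfp, hf⟩
    have hsumA := necessity_summable c θ₀ hθ₀ hθ₁ (fun n hn => (h4 n hn).1) f hf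
    refine ⟨?_, hsumA⟩
    have hGM2 : ∀ m : ℕ, 1 ≤ m → ∃ k : ℕ, m ≤ k ∧ k < m + N₀ ∧
        ∑ j ∈ Finset.Icc m (2*m), ‖c (j:ℤ) - c ((j:ℤ)+1)‖
          ≤ M * ‖c (k:ℤ)‖ := by
      intro m hm
      obtain ⟨k, hk, hsup⟩ := Finset.exists_mem_eq_sup'
        (Finset.nonempty_Ico.mpr (show m < m + N₀ by omega))
        (fun n : ℕ => ‖c (n:ℤ)‖)
      rw [Finset.mem_Ico] at hk
      refine ⟨k, hk.1, hk.2, ?_⟩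
      have h3 := h2 m hm
      calc ∑ j ∈ Finset.Icc m (2*m), ‖c (j:ℤ) - c ((j:ℤ)+1)‖
          ≤ M * (Finset.Ico m (m + N₀)).sup'
              (Finset.nonempty_Ico.mpr (show m < m + N₀ by omega))
              (fun n : ℕ => ‖c (n:ℤ)‖) := h3
        _ = M * ‖c (k:ℤ)‖ := by rw [hsup]
    rw [tendsto_zero_iff_norm_tendsto_zero]
    have hnorm : (fun n : ℕ => ‖(n:ℂ) * c (n:ℤ)‖)
        = fun n : ℕ => (n:ℝ) * ‖c (n:ℤ)‖ := by
      funext n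
      rw [norm_mul, Complex.norm_natCast]
    rw [hnorm, Metric.tendsto_atTop]
    intro ε hε
    have hDpos : (0:ℝ) < 4*(N₀:ℝ)*(1+M) := by positivity
    have hd : (0:ℝ) < ε / (4*(N₀:ℝ)*(1+M) + 1) := by positivity
    obtain ⟨m₃, hm₃1, hT⟩ := block_T_small c θ₀ hθ₀ hθ₁ h4 f hf hd
    refine ⟨max (4*N₀) (2*m₃) + 1, ?_⟩
    intro n hn
    have hn4 : 4*N₀ ≤ n := by have := le_max_left (4*N₀) (2*m₃); omega
    have hcomb := comb c N₀ hN₀ M hM hGM2 n hn4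
    have hsub : ∑ k ∈ Finset.Icc (n/2+1) n, ‖c (k:ℤ)‖
        ≤ ∑ k ∈ Finset.Icc (n/2+1) (2*(n/2+1)), ‖c (k:ℤ)‖ := by
      apply Finset.sum_le_sum_of_subset_of_nonneg
      · apply Finset.Icc_subset_Icc_right (by omega)
      · intro _ _ _; exact norm_nonneg _
    have hge : 2*m₃ ≤ n := by have := le_max_right (4*N₀) (2*m₃); omega
    have hTn := hT (n/2+1) (by omega)
    rw [Real.dist_eq, sub_zero,
      _root_.abs_of_nonneg (mul_nonneg (by positivity) (norm_nonneg _))]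
    have hfin : 4*(N₀:ℝ)*(1+M) * (ε/(4*(N₀:ℝ)*(1+M)+1)) < ε := by
      rw [mul_div_assoc', div_lt_iff₀ (by positivity)]
      nlinarith
    calc (n:ℝ) * ‖c (n:ℤ)‖
        ≤ 4*(N₀:ℝ)*(1+M) * ∑ k ∈ Finset.Icc (n/2+1) n, ‖c (k:ℤ)‖ := hcomb
      _ ≤ 4*(N₀:ℝ)*(1+M) * (ε/(4*(N₀:ℝ)*(1+M)+1)) := by
          apply mul_le_mul_of_nonneg_left (le_trans hsub hTn) hDpos.le
      _ < ε := hfin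
  · rintro ⟨htend, hsum⟩
    have hGM : ∀ m W, 1 ≤ m → (∀ k, m ≤ k → k < m + N₀ → ‖c (k:ℤ)‖ ≤ W) →
        ∑ j ∈ Finset.Icc m (2*m), ‖c (j:ℤ) - c ((j:ℤ)+1)‖ ≤ M * W := by
      intro m W hm hW
      have h3 := h2 m hm
      have h4' : (Finset.Ico m (m + N₀)).sup'
          (Finset.nonempty_Ico.mpr (show m < m + N₀ by omega))
          (fun n : ℕ => ‖c (n:ℤ)‖) ≤ W := by
        apply Finset.sup'_le
        intro k hk
        rw [Finset.mem_Ico] at hk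
        exact hW k hk.1 hk.2
      calc ∑ j ∈ Finset.Icc m (2*m), ‖c (j:ℤ) - c ((j:ℤ)+1)‖
          ≤ M * (Finset.Ico m (m + N₀)).sup'
              (Finset.nonempty_Ico.mpr (show m < m + N₀ by omega))
              (fun n : ℕ => ‖c (n:ℤ)‖) := h3
        _ ≤ M * W := mul_le_mul_of_nonneg_left h4' hM.le
    have htendR : Tendsto (fun n : ℕ => (n:ℝ) * ‖c (n:ℤ)‖) atTop (nhds 0) := by
      have h5 := tendsto_zero_iff_norm_tendsto_zero.mp htend
      have hnorm : (fun n : ℕ => ‖(n:ℂ) * c (n:ℤ)‖)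
          = fun n : ℕ => (n:ℝ) * ‖c (n:ℤ)‖ := by
        funext n
        rw [norm_mul, Complex.norm_natCast]
      rwa [hnorm] at h5
    exact sufficiency c N₀ M hM hGM htendR hsum
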